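/- For j = 1,…,n define the third order differential operators Z_j f = X_s²(∂_{x_j} f) − i y_j (E+n)(2E+2n−1)f − i X_s(q_j (2E+2n−1)f) and Z_{n+j} f = X_s²(∂_{y_j} f) + i x_j (E+n)(2E+2n−1)f − X_s(∂_{q_j}(2E+2n−1)f). Then each Z_l (l = 1,…,2n) preserves the solution space of the symplectic Dirac operator and raises homogeneity by one: if f is smooth with D_s f = 0 then D_s(Z_l f) = 0, and if moreover E f = h f for some h then E(Z_l f) = (h+1) Z_l f. -/

import Mathlib

noncomputable section

open Complex Finset

/-- The configuration space `ℝ^{2n} × ℝ^n`, with points `(x, y, q)` where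
`x y : Fin n → ℝ` are the base variables and `q : Fin n → ℝ` the fiber variables. -/
abbrev Pt (n : ℕ) := (Fin n → ℝ) × (Fin n → ℝ) × (Fin n → ℝ)

/-- Partial derivative with respect to `x_j`. -/
def pdx (n : ℕ) (j : Fin n) (f : Pt n → ℂ) : Pt n → ℂ := fun p =>
  deriv (fun t => f (Function.update p.1 j t, p.2.1, p.2.2)) (p.1 j)

/-- Partial derivative with respect to `y_j`. -/
def pdy (n : ℕ) (j : Fin n) (f : Pt n → ℂ) : Pt n → ℂ := fun p =>
  deriv (fun t => f (p.1, Function.update p.2.1 j t, p.2.2)) (p.2.1 j)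

/-- Partial derivative with respect to `q_j`. -/
def pdq (n : ℕ) (j : Fin n) (f : Pt n → ℂ) : Pt n → ℂ := fun p =>
  deriv (fun t => f (p.1, p.2.1, Function.update p.2.2 j t)) (p.2.2 j)

/-- The symplectic Dirac operator `D_s f = Σ_j (i q_j ∂_{y_j} f − ∂_{x_j} ∂_{q_j} f)`. -/
def Ds (n : ℕ) (f : Pt n → ℂ) : Pt n → ℂ := fun p =>
  ∑ j : Fin n, (Complex.I * (p.2.2 j : ℂ) * pdy n j f p - pdx n j (pdq n j f) p)

/-- The operator `X_s f = Σ_j (y_j ∂_{q_j} f + i x_j q_j f)`. -/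
def Xs (n : ℕ) (f : Pt n → ℂ) : Pt n → ℂ := fun p =>
  ∑ j : Fin n, ((p.2.1 j : ℂ) * pdq n j f p + Complex.I * (p.1 j : ℂ) * (p.2.2 j : ℂ) * f p)

/-- The Euler operator `E f = Σ_j (x_j ∂_{x_j} f + y_j ∂_{y_j} f)`. -/
def Eul (n : ℕ) (f : Pt n → ℂ) : Pt n → ℂ := fun p =>
  ∑ j : Fin n, ((p.1 j : ℂ) * pdx n j f p + (p.2.1 j : ℂ) * pdy n j f p)

/-- The operator `E + n`. -/
def EN (n : ℕ) (f : Pt n → ℂ) : Pt n → ℂ := fun p => Eul n f p + (n : ℂ) * f p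

/-- The operator `2E + 2n − 1`. -/
def A2n (n : ℕ) (f : Pt n → ℂ) : Pt n → ℂ := fun p =>
  2 * Eul n f p + (2 * (n : ℂ) - 1) * f p

/-- The raising operator
`Z_j f = X_s²(∂_{x_j} f) − i y_j (E+n)(2E+2n−1)f − i X_s(q_j (2E+2n−1)f)`. -/
def Zlow (n : ℕ) (j : Fin n) (f : Pt n → ℂ) : Pt n → ℂ := fun p =>
  Xs n (Xs n (pdx n j f)) p - Complex.I * (p.2.1 j : ℂ) * EN n (A2n n f) p -
    Complex.I * Xs n (fun r => (r.2.2 j : ℂ) * A2n n f r) p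

/-- The raising operator
`Z_{n+j} f = X_s²(∂_{y_j} f) + i x_j (E+n)(2E+2n−1)f − X_s(∂_{q_j}(2E+2n−1)f)`. -/
def Zhigh (n : ℕ) (j : Fin n) (f : Pt n → ℂ) : Pt n → ℂ := fun p =>
  Xs n (Xs n (pdy n j f)) p + Complex.I * (p.1 j : ℂ) * EN n (A2n n f) p -
    Xs n (pdq n j (A2n n f)) p

namespace SD


variable {n : ℕ}

abbrev S (f : Pt n → ℂ) : Prop := ContDiff ℝ (⊤ : ℕ∞) f

def pdv (v : Pt n) (f : Pt n → ℂ) : Pt n → ℂ := fun p => fderiv ℝ f p v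

def ex (j : Fin n) : Pt n := (Pi.single j 1, 0, 0)
def ey (j : Fin n) : Pt n := (0, Pi.single j 1, 0)
def eQ (j : Fin n) : Pt n := (0, 0, Pi.single j 1)

lemma S.diff {f : Pt n → ℂ} (hf : S f) : Differentiable ℝ f := hf.differentiable (by simp)

lemma S.pdv {f : Pt n → ℂ} (hf : S f) (v : Pt n) : S (SD.pdv v f) := by
  have h1 : ContDiff ℝ (⊤ : ℕ∞) (fderiv ℝ f) := hf.fderiv_right (by simp)
  exact h1.clm_apply contDiff_const

-- coordinate continuous linear maps
def cx (k : Fin n) : Pt n →L[ℝ] ℂ :=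
  Complex.ofRealCLM.comp ((ContinuousLinearMap.proj k).comp (ContinuousLinearMap.fst ℝ _ _))
def cy (k : Fin n) : Pt n →L[ℝ] ℂ :=
  Complex.ofRealCLM.comp ((ContinuousLinearMap.proj k).comp
    ((ContinuousLinearMap.fst ℝ _ _).comp (ContinuousLinearMap.snd ℝ _ _)))
def cq (k : Fin n) : Pt n →L[ℝ] ℂ :=
  Complex.ofRealCLM.comp ((ContinuousLinearMap.proj k).comp
    ((ContinuousLinearMap.snd ℝ _ _).comp (ContinuousLinearMap.snd ℝ _ _)))

lemma cx_apply (k : Fin n) (p : Pt n) : cx k p = (p.1 k : ℂ) := rfl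
lemma cy_apply (k : Fin n) (p : Pt n) : cy k p = (p.2.1 k : ℂ) := rfl
lemma cq_apply (k : Fin n) (p : Pt n) : cq k p = (p.2.2 k : ℂ) := rfl

lemma pdv_clm (e : Pt n →L[ℝ] ℂ) (v : Pt n) (p : Pt n) : pdv v (⇑e) p = e v := by
  simp [pdv, e.fderiv]

lemma ex_x (j k : Fin n) : ((ex j).1 k : ℂ) = if k = j then 1 else 0 := by
  simp [ex, Pi.single_apply]; split <;> simp
lemma ey_y (j k : Fin n) : ((ey j).2.1 k : ℂ) = if k = j then 1 else 0 := by
  simp [ey, Pi.single_apply]; split <;> simp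
lemma eQ_q (j k : Fin n) : ((eQ j).2.2 k : ℂ) = if k = j then 1 else 0 := by
  simp [eQ, Pi.single_apply]; split <;> simp
@[simp] lemma ex_y (j k : Fin n) : (ex j).2.1 k = 0 := rfl
@[simp] lemma ex_q (j k : Fin n) : (ex j).2.2 k = 0 := rfl
@[simp] lemma ey_x (j k : Fin n) : (ey j).1 k = 0 := rfl
@[simp] lemma ey_q (j k : Fin n) : (ey j).2.2 k = 0 := rfl
@[simp] lemma eQ_x (j k : Fin n) : (eQ j).1 k = 0 := rfl
@[simp] lemma eQ_y (j k : Fin n) : (eQ j).2.1 k = 0 := rfl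


-- ### linearity of pdv
lemma pdv_add {f g : Pt n → ℂ} (hf : S f) (hg : S g) (v p) :
    pdv v (fun r => f r + g r) p = pdv v f p + pdv v g p := by
  simp [pdv, fderiv_fun_add (hf.diff p) (hg.diff p)]

lemma pdv_sub {f g : Pt n → ℂ} (hf : S f) (hg : S g) (v p) :
    pdv v (fun r => f r - g r) p = pdv v f p - pdv v g p := by
  simp [pdv, fderiv_fun_sub (hf.diff p) (hg.diff p)]

lemma pdv_const_mul {f : Pt n → ℂ} (hf : S f) (c : ℂ) (v p) :
    pdv v (fun r => c * f r) p = c * pdv v f p := by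
  simp [pdv, fderiv_const_mul (hf.diff p) c]

lemma pdv_const (c : ℂ) (v : Pt n) (p) : pdv v (fun _ => c) p = 0 := by
  simp [pdv]

lemma pdv_sum {ι : Type*} (s : Finset ι) {F : ι → Pt n → ℂ} (hF : ∀ i, S (F i)) (v p) :
    pdv v (fun r => ∑ i ∈ s, F i r) p = ∑ i ∈ s, pdv v (F i) p := by
  simp only [pdv]
  rw [fderiv_fun_sum (fun i _ => (hF i).diff p)]
  simp

-- ### coordinate multiplication rules
lemma S.xmul {f : Pt n → ℂ} (hf : S f) (k : Fin n) : S (fun r => (r.1 k : ℂ) * f r) :=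
  ((cx k).contDiff).mul hf
lemma S.ymul {f : Pt n → ℂ} (hf : S f) (k : Fin n) : S (fun r => (r.2.1 k : ℂ) * f r) :=
  ((cy k).contDiff).mul hf
lemma S.qmul {f : Pt n → ℂ} (hf : S f) (k : Fin n) : S (fun r => (r.2.2 k : ℂ) * f r) :=
  ((cq k).contDiff).mul hf

lemma pdv_mul_clm {f : Pt n → ℂ} (hf : S f) (e : Pt n →L[ℝ] ℂ) (v p) :
    pdv v (fun r => e r * f r) p = e v * f p + e p * pdv v f p := by
  have h := fderiv_fun_mul (e.differentiableAt) (hf.diff p)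
  simp only [pdv, h]
  simp only [ContinuousLinearMap.add_apply, ContinuousLinearMap.smul_apply, e.fderiv,
    smul_eq_mul]
  ring

lemma pdv_xmul {f : Pt n → ℂ} (hf : S f) (k : Fin n) (v p) :
    pdv v (fun r => (r.1 k : ℂ) * f r) p = (v.1 k : ℂ) * f p + (p.1 k : ℂ) * pdv v f p :=
  pdv_mul_clm hf (cx k) v p
lemma pdv_ymul {f : Pt n → ℂ} (hf : S f) (k : Fin n) (v p) :
    pdv v (fun r => (r.2.1 k : ℂ) * f r) p = (v.2.1 k : ℂ) * f p + (p.2.1 k : ℂ) * pdv v f p :=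
  pdv_mul_clm hf (cy k) v p
lemma pdv_qmul {f : Pt n → ℂ} (hf : S f) (k : Fin n) (v p) :
    pdv v (fun r => (r.2.2 k : ℂ) * f r) p = (v.2.2 k : ℂ) * f p + (p.2.2 k : ℂ) * pdv v f p :=
  pdv_mul_clm hf (cq k) v p

-- ### Clairaut
lemma pdv_comm {f : Pt n → ℂ} (hf : S f) (v w : Pt n) (p) :
    pdv v (pdv w f) p = pdv w (pdv v f) p := by
  have hsymm : IsSymmSndFDerivAt ℝ f p :=
    hf.contDiffAt.isSymmSndFDerivAt (by rw [minSmoothness_of_isRCLikeNormedField]; exact WithTop.coe_le_coe.mpr (le_top : (2:ℕ∞) ≤ ⊤))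
  have hdf : Differentiable ℝ (fderiv ℝ f) :=
    (hf.fderiv_right (m := (⊤:ℕ∞)) (by simp)).differentiable (by simp)
  have key : ∀ u z : Pt n, ∀ x : Pt n,
      fderiv ℝ (fun y => fderiv ℝ f y u) x z = fderiv ℝ (fderiv ℝ f) x z u := by
    intro u z x
    rw [fderiv_clm_apply (hdf x) (differentiableAt_const u)]
    simp
  show fderiv ℝ (fun y => fderiv ℝ f y w) p v = fderiv ℝ (fun y => fderiv ℝ f y v) p w
  rw [key, key]
  exact hsymm v w

-- ### pdx/pdy/pdq conversion to pdv
lemma deriv_along {f : Pt n → ℂ} (hf : S f) (p v : Pt n) (c : ℝ) :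
    deriv (fun t => f (p + (t - c) • v)) c = pdv v f p := by
  have h1 : HasDerivAt (fun t : ℝ => p + (t - c) • v) v c := by
    simpa using (((hasDerivAt_id c).sub_const c).smul_const v).const_add p
  have h2 : HasFDerivAt f (fderiv ℝ f p) ((fun t : ℝ => p + (t - c) • v) c) := by
    simpa using (hf.diff p).hasFDerivAt
  have := h2.comp_hasDerivAt c h1
  exact this.deriv

lemma pdx_eq {f : Pt n → ℂ} (hf : S f) (j : Fin n) (p : Pt n) :
    pdx n j f p = pdv (ex j) f p := by
  have key : ∀ t : ℝ, ((Function.update p.1 j t, p.2.1, p.2.2) : Pt n)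
      = p + (t - p.1 j) • ex j := by
    intro t
    refine Prod.ext ?_ (Prod.ext ?_ ?_)
    · funext k
      by_cases h : k = j
      · subst h; simp [ex]
      · simp [ex, Function.update_apply, h, Pi.single_apply]
    · show p.2.1 = p.2.1 + (t - p.1 j) • (0 : Fin n → ℝ); simp
    · show p.2.2 = p.2.2 + (t - p.1 j) • (0 : Fin n → ℝ); simp
  show deriv (fun t => f (Function.update p.1 j t, p.2.1, p.2.2)) (p.1 j) = _
  simp only [key]
  exact deriv_along hf p (ex j) (p.1 j)

lemma pdy_eq {f : Pt n → ℂ} (hf : S f) (j : Fin n) (p : Pt n) :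
    pdy n j f p = pdv (ey j) f p := by
  have key : ∀ t : ℝ, ((p.1, Function.update p.2.1 j t, p.2.2) : Pt n)
      = p + (t - p.2.1 j) • ey j := by
    intro t
    refine Prod.ext ?_ (Prod.ext ?_ ?_)
    · show p.1 = p.1 + (t - p.2.1 j) • (0 : Fin n → ℝ); simp
    · funext k
      by_cases h : k = j
      · subst h; simp [ey]
      · simp [ey, Function.update_apply, h, Pi.single_apply]
    · show p.2.2 = p.2.2 + (t - p.2.1 j) • (0 : Fin n → ℝ); simp
  show deriv (fun t => f (p.1, Function.update p.2.1 j t, p.2.2)) (p.2.1 j) = _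
  simp only [key]
  exact deriv_along hf p (ey j) (p.2.1 j)

lemma pdq_eq {f : Pt n → ℂ} (hf : S f) (j : Fin n) (p : Pt n) :
    pdq n j f p = pdv (eQ j) f p := by
  have key : ∀ t : ℝ, ((p.1, p.2.1, Function.update p.2.2 j t) : Pt n)
      = p + (t - p.2.2 j) • eQ j := by
    intro t
    refine Prod.ext ?_ (Prod.ext ?_ ?_)
    · show p.1 = p.1 + (t - p.2.2 j) • (0 : Fin n → ℝ); simp
    · show p.2.1 = p.2.1 + (t - p.2.2 j) • (0 : Fin n → ℝ); simp
    · funext k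
      by_cases h : k = j
      · subst h; simp [eQ]
      · simp [eQ, Function.update_apply, h, Pi.single_apply]
  show deriv (fun t => f (p.1, p.2.1, Function.update p.2.2 j t)) (p.2.2 j) = _
  simp only [key]
  exact deriv_along hf p (eQ j) (p.2.2 j)


-- ### operators in pdv form, and smoothness
section Ops
variable {u : Pt n → ℂ}

def DsOp (u : Pt n → ℂ) : Pt n → ℂ := fun p =>
  ∑ m : Fin n, (Complex.I * (p.2.2 m : ℂ) * pdv (ey m) u p - pdv (ex m) (pdv (eQ m) u) p)
def XsOp (u : Pt n → ℂ) : Pt n → ℂ := fun p =>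
  ∑ k : Fin n, ((p.2.1 k : ℂ) * pdv (eQ k) u p
    + Complex.I * (p.1 k : ℂ) * (p.2.2 k : ℂ) * u p)
def EulOp (u : Pt n → ℂ) : Pt n → ℂ := fun p =>
  ∑ k : Fin n, ((p.1 k : ℂ) * pdv (ex k) u p + (p.2.1 k : ℂ) * pdv (ey k) u p)

lemma Ds_eq (hu : S u) : Ds n u = DsOp u := by
  funext p
  refine Finset.sum_congr rfl fun m _ => ?_
  have h1 : pdq n m u = pdv (eQ m) u := funext fun r => pdq_eq hu m r
  rw [pdy_eq hu, h1, pdx_eq (hu.pdv (eQ m)) m p]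

lemma Xs_eq (hu : S u) : Xs n u = XsOp u := by
  funext p
  exact Finset.sum_congr rfl fun k _ => by rw [pdq_eq hu]

lemma Eul_eq (hu : S u) : Eul n u = EulOp u := by
  funext p
  exact Finset.sum_congr rfl fun k _ => by rw [pdx_eq hu, pdy_eq hu]

lemma S.ixq (hu : S u) (k : Fin n) :
    S (fun r => Complex.I * (r.1 k : ℂ) * (r.2.2 k : ℂ) * u r) :=
  ((contDiff_const.mul (cx k).contDiff).mul (cq k).contDiff).mul hu

lemma S.iq (hu : S u) (m : Fin n) :
    S (fun r => Complex.I * (r.2.2 m : ℂ) * u r) :=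
  (contDiff_const.mul (cq m).contDiff).mul hu

lemma S.XsOp (hu : S u) : S (XsOp u) := by
  apply ContDiff.sum fun k _ => ?_
  exact ((hu.pdv (eQ k)).ymul k).add (hu.ixq k)

lemma S.DsOp (hu : S u) : S (DsOp u) := by
  apply ContDiff.sum fun m _ => ?_
  exact ((hu.pdv (ey m)).iq m).sub ((hu.pdv (eQ m)).pdv (ex m))

lemma S.EulOp (hu : S u) : S (EulOp u) := by
  apply ContDiff.sum fun k _ => ?_
  exact ((hu.pdv (ex k)).xmul k).add ((hu.pdv (ey k)).ymul k)

lemma S.Xs (hu : S u) : S (Xs n u) := by rw [Xs_eq hu]; exact hu.XsOp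
lemma S.Ds (hu : S u) : S (Ds n u) := by rw [Ds_eq hu]; exact hu.DsOp
lemma S.Eul (hu : S u) : S (Eul n u) := by rw [Eul_eq hu]; exact hu.EulOp
lemma S.EN (hu : S u) : S (EN n u) := hu.Eul.add (contDiff_const.mul hu)
lemma S.A2n (hu : S u) : S (A2n n u) :=
  (contDiff_const.mul hu.Eul).add (contDiff_const.mul hu)

-- helper pdv rules
lemma pdv_ixqmul (hu : S u) (k : Fin n) (v p) :
    pdv v (fun r => Complex.I * (r.1 k : ℂ) * (r.2.2 k : ℂ) * u r) p
      = Complex.I * (v.1 k : ℂ) * (p.2.2 k : ℂ) * u p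
        + Complex.I * (p.1 k : ℂ) * (v.2.2 k : ℂ) * u p
        + Complex.I * (p.1 k : ℂ) * (p.2.2 k : ℂ) * pdv v u p := by
  have h1 : (fun r : Pt n => Complex.I * (r.1 k : ℂ) * (r.2.2 k : ℂ) * u r)
      = fun r => Complex.I * ((r.1 k : ℂ) * ((r.2.2 k : ℂ) * u r)) := by
    funext r; ring
  rw [h1, pdv_const_mul ((hu.qmul k).xmul k), pdv_xmul (hu.qmul k), pdv_qmul hu]
  ring

lemma pdv_iqmul {w : Pt n → ℂ} (hw : S w) (m : Fin n) (v p) :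
    pdv v (fun r => Complex.I * (r.2.2 m : ℂ) * w r) p
      = Complex.I * (v.2.2 m : ℂ) * w p + Complex.I * (p.2.2 m : ℂ) * pdv v w p := by
  have h1 : (fun r : Pt n => Complex.I * (r.2.2 m : ℂ) * w r)
      = fun r => Complex.I * ((r.2.2 m : ℂ) * w r) := by funext r; ring
  rw [h1, pdv_const_mul (hw.qmul m), pdv_qmul hw]
  ring

end Ops


-- ### linearity of the operators
section Lin
variable {u w : Pt n → ℂ} {ι : Type*}

lemma XsOp_sum (s : Finset ι) {F : ι → Pt n → ℂ} (hF : ∀ i, S (F i)) (p) :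
    XsOp (fun r => ∑ i ∈ s, F i r) p = ∑ i ∈ s, XsOp (F i) p := by
  unfold XsOp
  rw [Finset.sum_comm]
  refine Finset.sum_congr rfl fun k _ => ?_
  rw [pdv_sum s hF, Finset.mul_sum, Finset.mul_sum, ← Finset.sum_add_distrib]

lemma DsOp_sum (s : Finset ι) {F : ι → Pt n → ℂ} (hF : ∀ i, S (F i)) (p) :
    DsOp (fun r => ∑ i ∈ s, F i r) p = ∑ i ∈ s, DsOp (F i) p := by
  unfold DsOp
  rw [Finset.sum_comm]
  refine Finset.sum_congr rfl fun m _ => ?_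
  have h1 : pdv (eQ m) (fun r => ∑ i ∈ s, F i r) = fun r => ∑ i ∈ s, pdv (eQ m) (F i) r :=
    funext fun r => pdv_sum s hF (eQ m) r
  rw [pdv_sum s hF, h1, pdv_sum s (fun i => (hF i).pdv (eQ m)), Finset.mul_sum,
    ← Finset.sum_sub_distrib]

lemma EulOp_sum (s : Finset ι) {F : ι → Pt n → ℂ} (hF : ∀ i, S (F i)) (p) :
    EulOp (fun r => ∑ i ∈ s, F i r) p = ∑ i ∈ s, EulOp (F i) p := by
  unfold EulOp
  rw [Finset.sum_comm]
  refine Finset.sum_congr rfl fun k _ => ?_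
  rw [pdv_sum s hF, pdv_sum s hF, Finset.mul_sum, Finset.mul_sum, ← Finset.sum_add_distrib]

lemma XsOp_const_mul (hu : S u) (c : ℂ) (p) :
    XsOp (fun r => c * u r) p = c * XsOp u p := by
  unfold XsOp
  rw [Finset.mul_sum]
  refine Finset.sum_congr rfl fun k _ => ?_
  rw [pdv_const_mul hu]
  ring

lemma DsOp_const_mul (hu : S u) (c : ℂ) (p) :
    DsOp (fun r => c * u r) p = c * DsOp u p := by
  unfold DsOp
  rw [Finset.mul_sum]
  refine Finset.sum_congr rfl fun m _ => ?_
  have h1 : pdv (eQ m) (fun r => c * u r) = fun r => c * pdv (eQ m) u r :=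
    funext fun r => pdv_const_mul hu c (eQ m) r
  rw [pdv_const_mul hu, h1, pdv_const_mul (hu.pdv (eQ m))]
  ring

lemma EulOp_const_mul (hu : S u) (c : ℂ) (p) :
    EulOp (fun r => c * u r) p = c * EulOp u p := by
  unfold EulOp
  rw [Finset.mul_sum]
  refine Finset.sum_congr rfl fun k _ => ?_
  rw [pdv_const_mul hu, pdv_const_mul hu]
  ring

lemma XsOp_sub (hu : S u) (hw : S w) (p) :
    XsOp (fun r => u r - w r) p = XsOp u p - XsOp w p := by
  unfold XsOp
  rw [← Finset.sum_sub_distrib]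
  refine Finset.sum_congr rfl fun k _ => ?_
  rw [pdv_sub hu hw]
  ring

lemma DsOp_sub (hu : S u) (hw : S w) (p) :
    DsOp (fun r => u r - w r) p = DsOp u p - DsOp w p := by
  unfold DsOp
  rw [← Finset.sum_sub_distrib]
  refine Finset.sum_congr rfl fun m _ => ?_
  have h1 : pdv (eQ m) (fun r => u r - w r) = fun r => pdv (eQ m) u r - pdv (eQ m) w r :=
    funext fun r => pdv_sub hu hw (eQ m) r
  rw [pdv_sub hu hw, h1, pdv_sub (hu.pdv (eQ m)) (hw.pdv (eQ m))]
  ring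

lemma EulOp_sub (hu : S u) (hw : S w) (p) :
    EulOp (fun r => u r - w r) p = EulOp u p - EulOp w p := by
  unfold EulOp
  rw [← Finset.sum_sub_distrib]
  refine Finset.sum_congr rfl fun k _ => ?_
  rw [pdv_sub hu hw, pdv_sub hu hw]
  ring

lemma XsOp_add (hu : S u) (hw : S w) (p) :
    XsOp (fun r => u r + w r) p = XsOp u p + XsOp w p := by
  unfold XsOp
  rw [← Finset.sum_add_distrib]
  refine Finset.sum_congr rfl fun k _ => ?_
  rw [pdv_add hu hw]
  ring

lemma DsOp_add (hu : S u) (hw : S w) (p) :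
    DsOp (fun r => u r + w r) p = DsOp u p + DsOp w p := by
  unfold DsOp
  rw [← Finset.sum_add_distrib]
  refine Finset.sum_congr rfl fun m _ => ?_
  have h1 : pdv (eQ m) (fun r => u r + w r) = fun r => pdv (eQ m) u r + pdv (eQ m) w r :=
    funext fun r => pdv_add hu hw (eQ m) r
  rw [pdv_add hu hw, h1, pdv_add (hu.pdv (eQ m)) (hw.pdv (eQ m))]
  ring

lemma EulOp_add (hu : S u) (hw : S w) (p) :
    EulOp (fun r => u r + w r) p = EulOp u p + EulOp w p := by
  unfold EulOp
  rw [← Finset.sum_add_distrib]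
  refine Finset.sum_congr rfl fun k _ => ?_
  rw [pdv_add hu hw, pdv_add hu hw]
  ring

lemma DsOp_zero (p : Pt n) : DsOp (n := n) (fun _ => 0) p = 0 := by
  unfold DsOp
  refine Finset.sum_eq_zero fun m _ => ?_
  have h2 : pdv (eQ m) (fun _ : Pt n => (0 : ℂ)) = fun _ => (0 : ℂ) :=
    funext fun r => pdv_const 0 (eQ m) r
  rw [pdv_const, h2, pdv_const]
  ring

lemma EulOp_zero (p : Pt n) : EulOp (n := n) (fun _ => 0) p = 0 := by
  unfold EulOp
  refine Finset.sum_eq_zero fun k _ => ?_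
  rw [pdv_const, pdv_const]
  ring

end Lin


-- ### commutators of pdv with the operators
section Comm
variable {u w : Pt n → ℂ}

lemma pdv_ixmul {w : Pt n → ℂ} (hw : S w) (m : Fin n) (v p) :
    pdv v (fun r => Complex.I * (r.1 m : ℂ) * w r) p
      = Complex.I * (v.1 m : ℂ) * w p + Complex.I * (p.1 m : ℂ) * pdv v w p := by
  have h1 : (fun r : Pt n => Complex.I * (r.1 m : ℂ) * w r)
      = fun r => Complex.I * ((r.1 m : ℂ) * w r) := by funext r; ring
  rw [h1, pdv_const_mul (hw.xmul m), pdv_xmul hw]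
  ring

lemma pdv_XsOp (hu : S u) (v p) :
    pdv v (XsOp u) p = XsOp (pdv v u) p
      + ∑ k : Fin n, ((v.2.1 k : ℂ) * pdv (eQ k) u p
          + Complex.I * (v.1 k : ℂ) * (p.2.2 k : ℂ) * u p
          + Complex.I * (p.1 k : ℂ) * (v.2.2 k : ℂ) * u p) := by
  have hF : ∀ k : Fin n, S (fun r => (r.2.1 k : ℂ) * pdv (eQ k) u r
      + Complex.I * (r.1 k : ℂ) * (r.2.2 k : ℂ) * u r) :=
    fun k => ((hu.pdv (eQ k)).ymul k).add (hu.ixq k)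
  unfold XsOp
  rw [pdv_sum Finset.univ hF, ← Finset.sum_add_distrib]
  refine Finset.sum_congr rfl fun k _ => ?_
  rw [pdv_add ((hu.pdv (eQ k)).ymul k) (hu.ixq k), pdv_ymul (hu.pdv (eQ k)), pdv_ixqmul hu,
    pdv_comm hu v (eQ k)]
  ring

lemma pdv_EulOp (hu : S u) (v p) :
    pdv v (EulOp u) p = EulOp (pdv v u) p
      + ∑ k : Fin n, ((v.1 k : ℂ) * pdv (ex k) u p + (v.2.1 k : ℂ) * pdv (ey k) u p) := by
  have hF : ∀ k : Fin n, S (fun r => (r.1 k : ℂ) * pdv (ex k) u r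
      + (r.2.1 k : ℂ) * pdv (ey k) u r) :=
    fun k => ((hu.pdv (ex k)).xmul k).add ((hu.pdv (ey k)).ymul k)
  unfold EulOp
  rw [pdv_sum Finset.univ hF, ← Finset.sum_add_distrib]
  refine Finset.sum_congr rfl fun k _ => ?_
  rw [pdv_add ((hu.pdv (ex k)).xmul k) ((hu.pdv (ey k)).ymul k), pdv_xmul (hu.pdv (ex k)),
    pdv_ymul (hu.pdv (ey k)), pdv_comm hu v (ex k), pdv_comm hu v (ey k)]
  ring

lemma pdv_DsOp (hu : S u) (v p) :
    pdv v (DsOp u) p = DsOp (pdv v u) p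
      + ∑ m : Fin n, Complex.I * (v.2.2 m : ℂ) * pdv (ey m) u p := by
  have hF : ∀ m : Fin n, S (fun r => Complex.I * (r.2.2 m : ℂ) * pdv (ey m) u r
      - pdv (ex m) (pdv (eQ m) u) r) :=
    fun m => ((hu.pdv (ey m)).iq m).sub ((hu.pdv (eQ m)).pdv (ex m))
  unfold DsOp
  rw [pdv_sum Finset.univ hF, ← Finset.sum_add_distrib]
  refine Finset.sum_congr rfl fun m _ => ?_
  have h1 : pdv v (pdv (eQ m) u) = pdv (eQ m) (pdv v u) :=
    funext fun r => pdv_comm hu v (eQ m) r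
  rw [pdv_sub ((hu.pdv (ey m)).iq m) ((hu.pdv (eQ m)).pdv (ex m)),
    pdv_iqmul (hu.pdv (ey m)), pdv_comm (hu.pdv (eQ m)) v (ex m), h1,
    pdv_comm hu v (ey m)]
  ring

-- basis-vector corollaries
lemma pdv_ey_XsOp (hu : S u) (m : Fin n) (p) :
    pdv (ey m) (XsOp u) p = XsOp (pdv (ey m) u) p + pdv (eQ m) u p := by
  rw [pdv_XsOp hu]
  congr 1
  simp [ex_x, ey_y, eQ_q, ite_mul, mul_ite]

lemma pdv_ex_XsOp (hu : S u) (m : Fin n) (p) :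
    pdv (ex m) (XsOp u) p = XsOp (pdv (ex m) u) p + Complex.I * (p.2.2 m : ℂ) * u p := by
  rw [pdv_XsOp hu]
  congr 1
  simp [ex_x, ey_y, eQ_q, ite_mul, mul_ite]

lemma pdv_eQ_XsOp (hu : S u) (m : Fin n) (p) :
    pdv (eQ m) (XsOp u) p = XsOp (pdv (eQ m) u) p + Complex.I * (p.1 m : ℂ) * u p := by
  rw [pdv_XsOp hu]
  congr 1
  simp [ex_x, ey_y, eQ_q, ite_mul, mul_ite]

lemma pdv_ex_EulOp (hu : S u) (m : Fin n) (p) :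
    pdv (ex m) (EulOp u) p = EulOp (pdv (ex m) u) p + pdv (ex m) u p := by
  rw [pdv_EulOp hu]
  congr 1
  simp [ex_x, ey_y, eQ_q, ite_mul, mul_ite]

lemma pdv_ey_EulOp (hu : S u) (m : Fin n) (p) :
    pdv (ey m) (EulOp u) p = EulOp (pdv (ey m) u) p + pdv (ey m) u p := by
  rw [pdv_EulOp hu]
  congr 1
  simp [ex_x, ey_y, eQ_q, ite_mul, mul_ite]

lemma pdv_eQ_EulOp (hu : S u) (m : Fin n) (p) :
    pdv (eQ m) (EulOp u) p = EulOp (pdv (eQ m) u) p := by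
  rw [pdv_EulOp hu]
  simp

lemma pdv_ex_DsOp (hu : S u) (m : Fin n) (p) :
    pdv (ex m) (DsOp u) p = DsOp (pdv (ex m) u) p := by
  rw [pdv_DsOp hu]
  simp

lemma pdv_ey_DsOp (hu : S u) (m : Fin n) (p) :
    pdv (ey m) (DsOp u) p = DsOp (pdv (ey m) u) p := by
  rw [pdv_DsOp hu]
  simp

lemma pdv_eQ_DsOp (hu : S u) (m : Fin n) (p) :
    pdv (eQ m) (DsOp u) p = DsOp (pdv (eQ m) u) p + Complex.I * pdv (ey m) u p := by
  rw [pdv_DsOp hu]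
  congr 1
  simp [ex_x, ey_y, eQ_q, ite_mul, mul_ite]

end Comm


-- ### multiplication commutators on Op forms
section MulComm
variable {u : Pt n → ℂ}

lemma S.ix (hu : S u) (m : Fin n) :
    S (fun r => Complex.I * (r.1 m : ℂ) * u r) :=
  (contDiff_const.mul (cx m).contDiff).mul hu

lemma DsOp_xmul (hu : S u) (j : Fin n) (p) :
    DsOp (fun r => (r.1 j : ℂ) * u r) p = (p.1 j : ℂ) * DsOp u p - pdv (eQ j) u p := by
  unfold DsOp
  have h1 : pdv (eQ j) u p = pdv (eQ j) u p := rfl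
  have hq : ∀ m : Fin n, pdv (eQ m) (fun r => (r.1 j : ℂ) * u r)
      = fun r => (r.1 j : ℂ) * pdv (eQ m) u r := by
    intro m; funext r; rw [pdv_xmul hu j (eQ m) r]; simp
  have key : ∀ m : Fin n,
      Complex.I * (p.2.2 m : ℂ) * pdv (ey m) (fun r => (r.1 j : ℂ) * u r) p
        - pdv (ex m) (pdv (eQ m) (fun r => (r.1 j : ℂ) * u r)) p
      = (p.1 j : ℂ) * (Complex.I * (p.2.2 m : ℂ) * pdv (ey m) u p
          - pdv (ex m) (pdv (eQ m) u) p)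
        - (if j = m then pdv (eQ m) u p else 0) := by
    intro m
    rw [pdv_xmul hu j (ey m) p, hq m, pdv_xmul (hu.pdv (eQ m)) j (ex m) p, ex_x m j]
    simp only [ey_x, Complex.ofReal_zero]
    split_ifs <;> ring
  rw [Finset.sum_congr rfl fun m _ => key m, Finset.sum_sub_distrib, ← Finset.mul_sum,
    Finset.sum_ite_eq]
  simp

lemma DsOp_ymul (hu : S u) (j : Fin n) (p) :
    DsOp (fun r => (r.2.1 j : ℂ) * u r) p
      = (p.2.1 j : ℂ) * DsOp u p + Complex.I * (p.2.2 j : ℂ) * u p := by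
  unfold DsOp
  have hq : ∀ m : Fin n, pdv (eQ m) (fun r => (r.2.1 j : ℂ) * u r)
      = fun r => (r.2.1 j : ℂ) * pdv (eQ m) u r := by
    intro m; funext r; rw [pdv_ymul hu j (eQ m) r]; simp
  have key : ∀ m : Fin n,
      Complex.I * (p.2.2 m : ℂ) * pdv (ey m) (fun r => (r.2.1 j : ℂ) * u r) p
        - pdv (ex m) (pdv (eQ m) (fun r => (r.2.1 j : ℂ) * u r)) p
      = (p.2.1 j : ℂ) * (Complex.I * (p.2.2 m : ℂ) * pdv (ey m) u p
          - pdv (ex m) (pdv (eQ m) u) p)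
        + (if j = m then Complex.I * (p.2.2 m : ℂ) * u p else 0) := by
    intro m
    rw [pdv_ymul hu j (ey m) p, hq m, pdv_ymul (hu.pdv (eQ m)) j (ex m) p, ey_y m j]
    simp only [ex_y, Complex.ofReal_zero]
    split_ifs <;> ring
  rw [Finset.sum_congr rfl fun m _ => key m, Finset.sum_add_distrib, ← Finset.mul_sum,
    Finset.sum_ite_eq]
  simp

lemma DsOp_qmul (hu : S u) (j : Fin n) (p) :
    DsOp (fun r => (r.2.2 j : ℂ) * u r) p
      = (p.2.2 j : ℂ) * DsOp u p - pdv (ex j) u p := by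
  unfold DsOp
  have hq : ∀ m : Fin n, pdv (eQ m) (fun r => (r.2.2 j : ℂ) * u r)
      = fun r => ((eQ m).2.2 j : ℂ) * u r + (r.2.2 j : ℂ) * pdv (eQ m) u r := by
    intro m; funext r; rw [pdv_qmul hu j (eQ m) r]
  have key : ∀ m : Fin n,
      Complex.I * (p.2.2 m : ℂ) * pdv (ey m) (fun r => (r.2.2 j : ℂ) * u r) p
        - pdv (ex m) (pdv (eQ m) (fun r => (r.2.2 j : ℂ) * u r)) p
      = (p.2.2 j : ℂ) * (Complex.I * (p.2.2 m : ℂ) * pdv (ey m) u p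
          - pdv (ex m) (pdv (eQ m) u) p)
        - (if j = m then pdv (ex m) u p else 0) := by
    intro m
    rw [pdv_qmul hu j (ey m) p, hq m,
      pdv_add (contDiff_const.mul hu) ((hu.pdv (eQ m)).qmul j),
      pdv_const_mul hu, pdv_qmul (hu.pdv (eQ m)) j (ex m) p, eQ_q m j]
    simp only [ey_q, ex_q, Complex.ofReal_zero]
    split_ifs <;> ring
  rw [Finset.sum_congr rfl fun m _ => key m, Finset.sum_sub_distrib, ← Finset.mul_sum,
    Finset.sum_ite_eq]
  simp

lemma EulOp_xmul (hu : S u) (j : Fin n) (p) :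
    EulOp (fun r => (r.1 j : ℂ) * u r) p
      = (p.1 j : ℂ) * EulOp u p + (p.1 j : ℂ) * u p := by
  unfold EulOp
  have key : ∀ m : Fin n,
      (p.1 m : ℂ) * pdv (ex m) (fun r => (r.1 j : ℂ) * u r) p
        + (p.2.1 m : ℂ) * pdv (ey m) (fun r => (r.1 j : ℂ) * u r) p
      = (p.1 j : ℂ) * ((p.1 m : ℂ) * pdv (ex m) u p + (p.2.1 m : ℂ) * pdv (ey m) u p)
        + (if j = m then (p.1 m : ℂ) * u p else 0) := by
    intro m
    rw [pdv_xmul hu j (ex m) p, pdv_xmul hu j (ey m) p, ex_x m j]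
    simp only [ey_x, Complex.ofReal_zero]
    split_ifs <;> ring
  rw [Finset.sum_congr rfl fun m _ => key m, Finset.sum_add_distrib, ← Finset.mul_sum,
    Finset.sum_ite_eq]
  simp

lemma EulOp_ymul (hu : S u) (j : Fin n) (p) :
    EulOp (fun r => (r.2.1 j : ℂ) * u r) p
      = (p.2.1 j : ℂ) * EulOp u p + (p.2.1 j : ℂ) * u p := by
  unfold EulOp
  have key : ∀ m : Fin n,
      (p.1 m : ℂ) * pdv (ex m) (fun r => (r.2.1 j : ℂ) * u r) p
        + (p.2.1 m : ℂ) * pdv (ey m) (fun r => (r.2.1 j : ℂ) * u r) p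
      = (p.2.1 j : ℂ) * ((p.1 m : ℂ) * pdv (ex m) u p + (p.2.1 m : ℂ) * pdv (ey m) u p)
        + (if j = m then (p.2.1 m : ℂ) * u p else 0) := by
    intro m
    rw [pdv_ymul hu j (ex m) p, pdv_ymul hu j (ey m) p, ey_y m j]
    simp only [ex_y, Complex.ofReal_zero]
    split_ifs <;> ring
  rw [Finset.sum_congr rfl fun m _ => key m, Finset.sum_add_distrib, ← Finset.mul_sum,
    Finset.sum_ite_eq]
  simp

lemma EulOp_qmul (hu : S u) (j : Fin n) (p) :
    EulOp (fun r => (r.2.2 j : ℂ) * u r) p = (p.2.2 j : ℂ) * EulOp u p := by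
  unfold EulOp
  have key : ∀ m : Fin n,
      (p.1 m : ℂ) * pdv (ex m) (fun r => (r.2.2 j : ℂ) * u r) p
        + (p.2.1 m : ℂ) * pdv (ey m) (fun r => (r.2.2 j : ℂ) * u r) p
      = (p.2.2 j : ℂ) * ((p.1 m : ℂ) * pdv (ex m) u p + (p.2.1 m : ℂ) * pdv (ey m) u p) := by
    intro m
    rw [pdv_qmul hu j (ex m) p, pdv_qmul hu j (ey m) p]
    simp only [ex_q, ey_q, Complex.ofReal_zero]
    ring
  rw [Finset.sum_congr rfl fun m _ => key m, ← Finset.mul_sum]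

lemma XsOp_xmul (hu : S u) (j : Fin n) (p) :
    XsOp (fun r => (r.1 j : ℂ) * u r) p = (p.1 j : ℂ) * XsOp u p := by
  unfold XsOp
  have key : ∀ k : Fin n,
      (p.2.1 k : ℂ) * pdv (eQ k) (fun r => (r.1 j : ℂ) * u r) p
        + Complex.I * (p.1 k : ℂ) * (p.2.2 k : ℂ) * ((p.1 j : ℂ) * u p)
      = (p.1 j : ℂ) * ((p.2.1 k : ℂ) * pdv (eQ k) u p
          + Complex.I * (p.1 k : ℂ) * (p.2.2 k : ℂ) * u p) := by
    intro k
    rw [pdv_xmul hu j (eQ k) p]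
    simp only [eQ_x, Complex.ofReal_zero]
    ring
  rw [Finset.sum_congr rfl fun k _ => key k, ← Finset.mul_sum]

lemma XsOp_ymul (hu : S u) (j : Fin n) (p) :
    XsOp (fun r => (r.2.1 j : ℂ) * u r) p = (p.2.1 j : ℂ) * XsOp u p := by
  unfold XsOp
  have key : ∀ k : Fin n,
      (p.2.1 k : ℂ) * pdv (eQ k) (fun r => (r.2.1 j : ℂ) * u r) p
        + Complex.I * (p.1 k : ℂ) * (p.2.2 k : ℂ) * ((p.2.1 j : ℂ) * u p)
      = (p.2.1 j : ℂ) * ((p.2.1 k : ℂ) * pdv (eQ k) u p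
          + Complex.I * (p.1 k : ℂ) * (p.2.2 k : ℂ) * u p) := by
    intro k
    rw [pdv_ymul hu j (eQ k) p]
    simp only [eQ_y, Complex.ofReal_zero]
    ring
  rw [Finset.sum_congr rfl fun k _ => key k, ← Finset.mul_sum]

lemma XsOp_qmul (hu : S u) (j : Fin n) (p) :
    XsOp (fun r => (r.2.2 j : ℂ) * u r) p
      = (p.2.2 j : ℂ) * XsOp u p + (p.2.1 j : ℂ) * u p := by
  unfold XsOp
  have key : ∀ k : Fin n,
      (p.2.1 k : ℂ) * pdv (eQ k) (fun r => (r.2.2 j : ℂ) * u r) p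
        + Complex.I * (p.1 k : ℂ) * (p.2.2 k : ℂ) * ((p.2.2 j : ℂ) * u p)
      = (p.2.2 j : ℂ) * ((p.2.1 k : ℂ) * pdv (eQ k) u p
          + Complex.I * (p.1 k : ℂ) * (p.2.2 k : ℂ) * u p)
        + (if j = k then (p.2.1 k : ℂ) * u p else 0) := by
    intro k
    rw [pdv_qmul hu j (eQ k) p, eQ_q k j]
    split_ifs <;> ring
  rw [Finset.sum_congr rfl fun k _ => key k, Finset.sum_add_distrib, ← Finset.mul_sum,
    Finset.sum_ite_eq]
  simp

end MulComm


-- ### main operator commutators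
section Main
variable {u : Pt n → ℂ}

lemma sum_n (c : ℂ) : ∑ _m : Fin n, c = (n : ℂ) * c := by
  simp [Finset.sum_const, mul_comm]

lemma DsOp_XsOp (hu : S u) (p) :
    DsOp (XsOp u) p = XsOp (DsOp u) p - Complex.I * (EulOp u p + (n : ℂ) * u p) := by
  have hF : ∀ m : Fin n, S (fun r => Complex.I * (r.2.2 m : ℂ) * pdv (ey m) u r
      - pdv (ex m) (pdv (eQ m) u) r) :=
    fun m => ((hu.pdv (ey m)).iq m).sub ((hu.pdv (eQ m)).pdv (ex m))
  have key : ∀ m : Fin n,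
      Complex.I * (p.2.2 m : ℂ) * pdv (ey m) (XsOp u) p
        - pdv (ex m) (pdv (eQ m) (XsOp u)) p
      = XsOp (fun r => Complex.I * (r.2.2 m : ℂ) * pdv (ey m) u r
            - pdv (ex m) (pdv (eQ m) u) r) p
        - Complex.I * ((p.1 m : ℂ) * pdv (ex m) u p + (p.2.1 m : ℂ) * pdv (ey m) u p)
        - Complex.I * u p := by
    intro m
    have e1 : pdv (eQ m) (XsOp u)
        = fun r => XsOp (pdv (eQ m) u) r + Complex.I * (r.1 m : ℂ) * u r :=
      funext fun r => pdv_eQ_XsOp hu m r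
    have e2 : XsOp (fun r => Complex.I * (r.2.2 m : ℂ) * pdv (ey m) u r
          - pdv (ex m) (pdv (eQ m) u) r) p
        = Complex.I * (XsOp (fun r => (r.2.2 m : ℂ) * pdv (ey m) u r) p)
          - XsOp (pdv (ex m) (pdv (eQ m) u)) p := by
      rw [XsOp_sub ((hu.pdv (ey m)).iq m) ((hu.pdv (eQ m)).pdv (ex m)),
        show (fun r : Pt n => Complex.I * (r.2.2 m : ℂ) * pdv (ey m) u r)
          = fun r => Complex.I * ((r.2.2 m : ℂ) * pdv (ey m) u r) from
          funext fun r => by ring,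
        XsOp_const_mul ((hu.pdv (ey m)).qmul m)]
    rw [pdv_ey_XsOp hu m p, e1,
      pdv_add ((hu.pdv (eQ m)).XsOp) (hu.ix m),
      pdv_ex_XsOp (hu.pdv (eQ m)) m p, pdv_ixmul hu m (ex m) p, e2,
      XsOp_qmul (hu.pdv (ey m)) m p, ex_x m m]
    norm_num
    ring
  unfold DsOp
  rw [Finset.sum_congr rfl fun m _ => key m, Finset.sum_sub_distrib, Finset.sum_sub_distrib,
    ← XsOp_sum Finset.univ hF p, sum_n]
  have e3 : XsOp (fun r => ∑ m : Fin n, (Complex.I * (r.2.2 m : ℂ) * pdv (ey m) u r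
      - pdv (ex m) (pdv (eQ m) u) r)) p = XsOp (DsOp u) p := rfl
  rw [e3]
  unfold EulOp
  rw [← Finset.mul_sum]
  ring

lemma DsOp_EulOp (hu : S u) (p) :
    DsOp (EulOp u) p = EulOp (DsOp u) p + DsOp u p := by
  have hF : ∀ m : Fin n, S (fun r => Complex.I * (r.2.2 m : ℂ) * pdv (ey m) u r
      - pdv (ex m) (pdv (eQ m) u) r) :=
    fun m => ((hu.pdv (ey m)).iq m).sub ((hu.pdv (eQ m)).pdv (ex m))
  have key : ∀ m : Fin n,
      Complex.I * (p.2.2 m : ℂ) * pdv (ey m) (EulOp u) p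
        - pdv (ex m) (pdv (eQ m) (EulOp u)) p
      = EulOp (fun r => Complex.I * (r.2.2 m : ℂ) * pdv (ey m) u r
            - pdv (ex m) (pdv (eQ m) u) r) p
        + (Complex.I * (p.2.2 m : ℂ) * pdv (ey m) u p - pdv (ex m) (pdv (eQ m) u) p) := by
    intro m
    have e1 : pdv (eQ m) (EulOp u) = EulOp (pdv (eQ m) u) :=
      funext fun r => pdv_eQ_EulOp hu m r
    have e2 : EulOp (fun r => Complex.I * (r.2.2 m : ℂ) * pdv (ey m) u r
          - pdv (ex m) (pdv (eQ m) u) r) p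
        = Complex.I * ((p.2.2 m : ℂ) * EulOp (pdv (ey m) u) p)
          - EulOp (pdv (ex m) (pdv (eQ m) u)) p := by
      rw [EulOp_sub ((hu.pdv (ey m)).iq m) ((hu.pdv (eQ m)).pdv (ex m)),
        show (fun r : Pt n => Complex.I * (r.2.2 m : ℂ) * pdv (ey m) u r)
          = fun r => Complex.I * ((r.2.2 m : ℂ) * pdv (ey m) u r) from
          funext fun r => by ring,
        EulOp_const_mul ((hu.pdv (ey m)).qmul m), EulOp_qmul (hu.pdv (ey m)) m p]
    rw [pdv_ey_EulOp hu m p, e1, pdv_ex_EulOp (hu.pdv (eQ m)) m p, e2]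
    ring
  unfold DsOp
  rw [Finset.sum_congr rfl fun m _ => key m, Finset.sum_add_distrib,
    ← EulOp_sum Finset.univ hF p]

lemma EulOp_XsOp (hu : S u) (p) :
    EulOp (XsOp u) p = XsOp (EulOp u) p + XsOp u p := by
  have hF : ∀ k : Fin n, S (fun r => (r.1 k : ℂ) * pdv (ex k) u r
      + (r.2.1 k : ℂ) * pdv (ey k) u r) :=
    fun k => ((hu.pdv (ex k)).xmul k).add ((hu.pdv (ey k)).ymul k)
  have key : ∀ k : Fin n,
      (p.1 k : ℂ) * pdv (ex k) (XsOp u) p + (p.2.1 k : ℂ) * pdv (ey k) (XsOp u) p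
      = XsOp (fun r => (r.1 k : ℂ) * pdv (ex k) u r + (r.2.1 k : ℂ) * pdv (ey k) u r) p
        + ((p.2.1 k : ℂ) * pdv (eQ k) u p
            + Complex.I * (p.1 k : ℂ) * (p.2.2 k : ℂ) * u p) := by
    intro k
    have e2 : XsOp (fun r => (r.1 k : ℂ) * pdv (ex k) u r
          + (r.2.1 k : ℂ) * pdv (ey k) u r) p
        = (p.1 k : ℂ) * XsOp (pdv (ex k) u) p + (p.2.1 k : ℂ) * XsOp (pdv (ey k) u) p := by
      rw [XsOp_add ((hu.pdv (ex k)).xmul k) ((hu.pdv (ey k)).ymul k),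
        XsOp_xmul (hu.pdv (ex k)) k p, XsOp_ymul (hu.pdv (ey k)) k p]
    rw [pdv_ex_XsOp hu k p, pdv_ey_XsOp hu k p, e2]
    ring
  unfold EulOp
  rw [Finset.sum_congr rfl fun k _ => key k, Finset.sum_add_distrib,
    ← XsOp_sum Finset.univ hF p]
  rfl

end Main


-- ### assembly
section Assembly
variable {f : Pt n → ℂ}

lemma XsOp_zero (p : Pt n) : XsOp (n := n) (fun _ => 0) p = 0 := by
  unfold XsOp
  refine Finset.sum_eq_zero fun k _ => ?_
  rw [pdv_const]
  ring

def Gf (f : Pt n → ℂ) : Pt n → ℂ := fun r => 2 * EulOp f r + (2 * (n : ℂ) - 1) * f r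
def Hf (f : Pt n → ℂ) : Pt n → ℂ := fun r => EulOp (Gf f) r + (n : ℂ) * Gf f r

lemma S.G (hf : S f) : S (Gf f) :=
  (contDiff_const.mul hf.EulOp).add (contDiff_const.mul hf)
lemma S.H (hf : S f) : S (Hf f) := hf.G.EulOp.add (contDiff_const.mul hf.G)

lemma DsOp_G (hf : S f) (hk : DsOp f = fun _ => 0) : DsOp (Gf f) = fun _ => 0 := by
  funext p
  unfold Gf
  rw [DsOp_add (contDiff_const.mul hf.EulOp) (contDiff_const.mul hf) p,
    DsOp_const_mul hf.EulOp 2 p, DsOp_const_mul hf _ p, DsOp_EulOp hf p, hk, EulOp_zero]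
  simp

lemma DsOp_H (hf : S f) (hk : DsOp f = fun _ => 0) : DsOp (Hf f) = fun _ => 0 := by
  have hkG := DsOp_G hf hk
  funext p
  unfold Hf
  rw [DsOp_add hf.G.EulOp (contDiff_const.mul hf.G) p, DsOp_const_mul hf.G _ p,
    DsOp_EulOp hf.G p, hkG, EulOp_zero]
  simp

lemma T1gen (hf : S f) (hk : DsOp f = fun _ => 0) {v : Pt n}
    (hvD : ∀ r, pdv v (DsOp f) r = DsOp (pdv v f) r)
    (hvE : ∀ r, pdv v (EulOp f) r = EulOp (pdv v f) r + pdv v f r) (p) :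
    DsOp (XsOp (XsOp (pdv v f))) p = -(Complex.I * XsOp (pdv v (Gf f)) p) := by
  have hW : S (pdv v f) := hf.pdv v
  have hDW : DsOp (pdv v f) = fun _ => 0 := funext fun r => by
    rw [← hvD r, hk, pdv_const]
  have hDXW : DsOp (XsOp (pdv v f))
      = fun r => (-Complex.I) * (EulOp (pdv v f) r + (n : ℂ) * pdv v f r) := by
    funext r
    rw [DsOp_XsOp hW r, hDW, XsOp_zero]
    ring
  have hpdvG : pdv v (Gf f)
      = fun r => 2 * (EulOp (pdv v f) r + pdv v f r) + (2 * (n : ℂ) - 1) * pdv v f r := by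
    funext r
    unfold Gf
    rw [pdv_add (contDiff_const.mul hf.EulOp) (contDiff_const.mul hf),
      pdv_const_mul hf.EulOp, pdv_const_mul hf, hvE r]
  rw [DsOp_XsOp hW.XsOp p, hDXW,
    XsOp_const_mul (hW.EulOp.add (contDiff_const.mul hW)) (-Complex.I) p,
    XsOp_add hW.EulOp (contDiff_const.mul hW) p, XsOp_const_mul hW ((n : ℂ)) p,
    EulOp_XsOp hW p, hpdvG,
    XsOp_add (contDiff_const.mul (hW.EulOp.add hW)) (contDiff_const.mul hW) p,
    XsOp_const_mul (hW.EulOp.add hW) 2 p, XsOp_const_mul hW (2 * (n : ℂ) - 1) p,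
    XsOp_add hW.EulOp hW p]
  ring

lemma ZlowOp_ker (hf : S f) (hk : DsOp f = fun _ => 0) (j : Fin n) (p) :
    DsOp (fun r => XsOp (XsOp (pdv (ex j) f)) r
      - Complex.I * ((r.2.1 j : ℂ) * Hf f r)
      - Complex.I * XsOp (fun r' => (r'.2.2 j : ℂ) * Gf f r') r) p = 0 := by
  have hG : S (Gf f) := hf.G
  have hH : S (Hf f) := hf.H
  have hkG := DsOp_G hf hk
  have hkH := DsOp_H hf hk
  have hQg : S (fun r' : Pt n => (r'.2.2 j : ℂ) * Gf f r') := hG.qmul j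
  have hT1 := T1gen hf hk (v := ex j) (fun r => pdv_ex_DsOp hf j r)
    (fun r => pdv_ex_EulOp hf j r) p
  have h2 : DsOp (fun r => Complex.I * ((r.2.1 j : ℂ) * Hf f r)) p
      = -((p.2.2 j : ℂ) * Hf f p) := by
    rw [DsOp_const_mul (hH.ymul j) Complex.I p, DsOp_ymul hH j p, hkH]
    linear_combination ((p.2.2 j : ℂ) * Hf f p) * Complex.I_sq
  have hDQg : DsOp (fun r' => (r'.2.2 j : ℂ) * Gf f r')
      = fun r => (-1 : ℂ) * pdv (ex j) (Gf f) r := by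
    funext r
    rw [DsOp_qmul hG j r, hkG]
    simp
  have h3 : DsOp (fun r => Complex.I * XsOp (fun r' => (r'.2.2 j : ℂ) * Gf f r') r) p
      = -(Complex.I * XsOp (pdv (ex j) (Gf f)) p) + (p.2.2 j : ℂ) * Hf f p := by
    rw [DsOp_const_mul hQg.XsOp Complex.I p, DsOp_XsOp hQg p, hDQg,
      XsOp_const_mul (hG.pdv (ex j)) (-1 : ℂ) p, EulOp_qmul hG j p]
    unfold Hf
    linear_combination (-((p.2.2 j : ℂ) * (EulOp (Gf f) p + (n : ℂ) * Gf f p)))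
      * Complex.I_sq
  have hW : S (pdv (ex j) f) := hf.pdv (ex j)
  rw [DsOp_sub (hW.XsOp.XsOp.sub (contDiff_const.mul (hH.ymul j)))
      (contDiff_const.mul hQg.XsOp) p,
    DsOp_sub hW.XsOp.XsOp (contDiff_const.mul (hH.ymul j)) p,
    hT1, h2, h3]
  ring

lemma ZhighOp_ker (hf : S f) (hk : DsOp f = fun _ => 0) (j : Fin n) (p) :
    DsOp (fun r => XsOp (XsOp (pdv (ey j) f)) r
      + Complex.I * ((r.1 j : ℂ) * Hf f r)
      - XsOp (pdv (eQ j) (Gf f)) r) p = 0 := by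
  have hG : S (Gf f) := hf.G
  have hH : S (Hf f) := hf.H
  have hkG := DsOp_G hf hk
  have hkH := DsOp_H hf hk
  have hW : S (pdv (ey j) f) := hf.pdv (ey j)
  have hT1 := T1gen hf hk (v := ey j) (fun r => pdv_ey_DsOp hf j r)
    (fun r => pdv_ey_EulOp hf j r) p
  have h2 : DsOp (fun r => Complex.I * ((r.1 j : ℂ) * Hf f r)) p
      = -(Complex.I * pdv (eQ j) (Hf f) p) := by
    rw [DsOp_const_mul (hH.xmul j) Complex.I p, DsOp_xmul hH j p, hkH]
    ring
  have hDQG : DsOp (pdv (eQ j) (Gf f)) = fun r => (-Complex.I) * pdv (ey j) (Gf f) r := by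
    funext r
    have h := pdv_eQ_DsOp hG j r
    rw [hkG, pdv_const] at h
    linear_combination -h
  have hEQG : EulOp (pdv (eQ j) (Gf f)) p = pdv (eQ j) (EulOp (Gf f)) p :=
    (pdv_eQ_EulOp hG j p).symm
  have hQH : pdv (eQ j) (Hf f) p
      = pdv (eQ j) (EulOp (Gf f)) p + (n : ℂ) * pdv (eQ j) (Gf f) p := by
    unfold Hf
    rw [pdv_add hG.EulOp (contDiff_const.mul hG), pdv_const_mul hG]
  have h3 : DsOp (XsOp (pdv (eQ j) (Gf f))) p
      = -(Complex.I * XsOp (pdv (ey j) (Gf f)) p)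
        - Complex.I * pdv (eQ j) (Hf f) p := by
    rw [DsOp_XsOp (hG.pdv (eQ j)) p, hDQG,
      XsOp_const_mul (hG.pdv (ey j)) (-Complex.I) p, hEQG, hQH]
    ring
  rw [DsOp_sub ((hW.XsOp.XsOp.add (contDiff_const.mul (hH.xmul j))))
      (hG.pdv (eQ j)).XsOp p,
    DsOp_add hW.XsOp.XsOp (contDiff_const.mul (hH.xmul j)) p,
    hT1, h2, h3]
  ring

lemma ZlowOp_eul (hf : S f) {h : ℂ} (hE : EulOp f = fun r => h * f r) (j : Fin n) (p) :
    EulOp (fun r => XsOp (XsOp (pdv (ex j) f)) r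
      - Complex.I * ((r.2.1 j : ℂ) * Hf f r)
      - Complex.I * XsOp (fun r' => (r'.2.2 j : ℂ) * Gf f r') r) p
    = (h + 1) * (XsOp (XsOp (pdv (ex j) f)) p
      - Complex.I * ((p.2.1 j : ℂ) * Hf f p)
      - Complex.I * XsOp (fun r' => (r'.2.2 j : ℂ) * Gf f r') p) := by
  have hG : S (Gf f) := hf.G
  have hH : S (Hf f) := hf.H
  have hW : S (pdv (ex j) f) := hf.pdv (ex j)
  have hQg : S (fun r' : Pt n => (r'.2.2 j : ℂ) * Gf f r') := hG.qmul j
  have hEG : EulOp (Gf f) = fun r => h * Gf f r := by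
    funext r
    unfold Gf
    rw [EulOp_add (contDiff_const.mul hf.EulOp) (contDiff_const.mul hf) r,
      EulOp_const_mul hf.EulOp 2 r, EulOp_const_mul hf _ r, hE]
    have h2 : EulOp (fun r => h * f r) = fun r => h * EulOp f r :=
      funext fun r => EulOp_const_mul hf h r
    rw [h2, hE]
    ring
  have hEH : EulOp (Hf f) = fun r => h * Hf f r := by
    funext r
    unfold Hf
    rw [EulOp_add hG.EulOp (contDiff_const.mul hG) r, EulOp_const_mul hG _ r, hEG]
    have h2 : EulOp (fun r => h * Gf f r) = fun r => h * EulOp (Gf f) r :=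
      funext fun r => EulOp_const_mul hG h r
    rw [h2, hEG]
    ring
  have hEW : EulOp (pdv (ex j) f) = fun r => (h - 1) * pdv (ex j) f r := by
    funext r
    have h1 := pdv_ex_EulOp hf j r
    rw [hE, pdv_const_mul hf] at h1
    linear_combination -h1
  have hEXW : EulOp (XsOp (pdv (ex j) f)) = fun r => h * XsOp (pdv (ex j) f) r := by
    funext r
    rw [EulOp_XsOp hW r, hEW, XsOp_const_mul hW (h - 1) r]
    ring
  have hT1 : EulOp (XsOp (XsOp (pdv (ex j) f))) p
      = (h + 1) * XsOp (XsOp (pdv (ex j) f)) p := by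
    rw [EulOp_XsOp hW.XsOp p, hEXW, XsOp_const_mul hW.XsOp h p]
    ring
  have hT2 : EulOp (fun r => Complex.I * ((r.2.1 j : ℂ) * Hf f r)) p
      = (h + 1) * (Complex.I * ((p.2.1 j : ℂ) * Hf f p)) := by
    rw [EulOp_const_mul (hH.ymul j) Complex.I p, EulOp_ymul hH j p, hEH]
    ring
  have hEQg : EulOp (fun r' : Pt n => (r'.2.2 j : ℂ) * Gf f r')
      = fun r => h * ((r.2.2 j : ℂ) * Gf f r) := by
    funext r
    rw [EulOp_qmul hG j r, hEG]
    ring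
  have hT3 : EulOp (fun r => Complex.I * XsOp (fun r' => (r'.2.2 j : ℂ) * Gf f r') r) p
      = (h + 1) * (Complex.I * XsOp (fun r' => (r'.2.2 j : ℂ) * Gf f r') p) := by
    rw [EulOp_const_mul hQg.XsOp Complex.I p, EulOp_XsOp hQg p, hEQg,
      XsOp_const_mul hQg h p]
    ring
  rw [EulOp_sub (hW.XsOp.XsOp.sub (contDiff_const.mul (hH.ymul j)))
      (contDiff_const.mul hQg.XsOp) p,
    EulOp_sub hW.XsOp.XsOp (contDiff_const.mul (hH.ymul j)) p,
    hT1, hT2, hT3]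
  ring

lemma ZhighOp_eul (hf : S f) {h : ℂ} (hE : EulOp f = fun r => h * f r) (j : Fin n) (p) :
    EulOp (fun r => XsOp (XsOp (pdv (ey j) f)) r
      + Complex.I * ((r.1 j : ℂ) * Hf f r)
      - XsOp (pdv (eQ j) (Gf f)) r) p
    = (h + 1) * (XsOp (XsOp (pdv (ey j) f)) p
      + Complex.I * ((p.1 j : ℂ) * Hf f p)
      - XsOp (pdv (eQ j) (Gf f)) p) := by
  have hG : S (Gf f) := hf.G
  have hH : S (Hf f) := hf.H
  have hW : S (pdv (ey j) f) := hf.pdv (ey j)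
  have hEG : EulOp (Gf f) = fun r => h * Gf f r := by
    funext r
    unfold Gf
    rw [EulOp_add (contDiff_const.mul hf.EulOp) (contDiff_const.mul hf) r,
      EulOp_const_mul hf.EulOp 2 r, EulOp_const_mul hf _ r, hE]
    have h2 : EulOp (fun r => h * f r) = fun r => h * EulOp f r :=
      funext fun r => EulOp_const_mul hf h r
    rw [h2, hE]
    ring
  have hEH : EulOp (Hf f) = fun r => h * Hf f r := by
    funext r
    unfold Hf
    rw [EulOp_add hG.EulOp (contDiff_const.mul hG) r, EulOp_const_mul hG _ r, hEG]
    have h2 : EulOp (fun r => h * Gf f r) = fun r => h * EulOp (Gf f) r :=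
      funext fun r => EulOp_const_mul hG h r
    rw [h2, hEG]
    ring
  have hEW : EulOp (pdv (ey j) f) = fun r => (h - 1) * pdv (ey j) f r := by
    funext r
    have h1 := pdv_ey_EulOp hf j r
    rw [hE, pdv_const_mul hf] at h1
    linear_combination -h1
  have hEXW : EulOp (XsOp (pdv (ey j) f)) = fun r => h * XsOp (pdv (ey j) f) r := by
    funext r
    rw [EulOp_XsOp hW r, hEW, XsOp_const_mul hW (h - 1) r]
    ring
  have hT1 : EulOp (XsOp (XsOp (pdv (ey j) f))) p
      = (h + 1) * XsOp (XsOp (pdv (ey j) f)) p := by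
    rw [EulOp_XsOp hW.XsOp p, hEXW, XsOp_const_mul hW.XsOp h p]
    ring
  have hT2 : EulOp (fun r => Complex.I * ((r.1 j : ℂ) * Hf f r)) p
      = (h + 1) * (Complex.I * ((p.1 j : ℂ) * Hf f p)) := by
    rw [EulOp_const_mul (hH.xmul j) Complex.I p, EulOp_xmul hH j p, hEH]
    ring
  have hEQG : EulOp (pdv (eQ j) (Gf f)) = fun r => h * pdv (eQ j) (Gf f) r := by
    funext r
    rw [← pdv_eQ_EulOp hG j r, hEG, pdv_const_mul hG]
  have hT3 : EulOp (XsOp (pdv (eQ j) (Gf f))) p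
      = (h + 1) * XsOp (pdv (eQ j) (Gf f)) p := by
    rw [EulOp_XsOp (hG.pdv (eQ j)) p, hEQG, XsOp_const_mul (hG.pdv (eQ j)) h p]
    ring
  rw [EulOp_sub (hW.XsOp.XsOp.add (contDiff_const.mul (hH.xmul j)))
      (hG.pdv (eQ j)).XsOp p,
    EulOp_add hW.XsOp.XsOp (contDiff_const.mul (hH.xmul j)) p,
    hT1, hT2, hT3]
  ring

end Assembly

end SD

/-- Each of the operators `Z_l`, `l = 1, …, 2n`, preserves the solution space of the
symplectic Dirac operator and raises homogeneity by one. -/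
theorem Z_preserves_kernel_and_raises (n : ℕ) (hn : 1 ≤ n) (j : Fin n) (f : Pt n → ℂ)
    (hf : ContDiff ℝ (⊤ : ℕ∞) f) (hker : ∀ p, Ds n f p = 0) :
    (∀ p, Ds n (Zlow n j f) p = 0) ∧ (∀ p, Ds n (Zhigh n j f) p = 0) ∧
    (∀ h : ℂ, (∀ p, Eul n f p = h * f p) →
      (∀ p, Eul n (Zlow n j f) p = (h + 1) * Zlow n j f p) ∧
      (∀ p, Eul n (Zhigh n j f) p = (h + 1) * Zhigh n j f p)) := by
  have hf' : SD.S f := hf.of_le (by simp)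
  have hkOp : SD.DsOp f = fun _ => 0 := funext fun p => by
    rw [← SD.Ds_eq hf']; exact hker p
  have hG : SD.S (SD.Gf f) := hf'.G
  have hH : SD.S (SD.Hf f) := hf'.H
  have hW : SD.S (SD.pdv (SD.ex j) f) := hf'.pdv _
  have hWy : SD.S (SD.pdv (SD.ey j) f) := hf'.pdv _
  have hQg : SD.S (fun r : Pt n => (r.2.2 j : ℂ) * SD.Gf f r) := hG.qmul j
  have hAG : A2n n f = SD.Gf f := by
    funext p
    unfold A2n SD.Gf
    rw [SD.Eul_eq hf']
  have hEN : ∀ p : Pt n, EN n (A2n n f) p = SD.Hf f p := by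
    intro p
    unfold EN SD.Hf
    rw [hAG, SD.Eul_eq hG]
  have hpdx : pdx n j f = SD.pdv (SD.ex j) f := funext fun p => SD.pdx_eq hf' j p
  have hpdy : pdy n j f = SD.pdv (SD.ey j) f := funext fun p => SD.pdy_eq hf' j p
  have hXXW : Xs n (Xs n (pdx n j f)) = SD.XsOp (SD.XsOp (SD.pdv (SD.ex j) f)) := by
    rw [hpdx, SD.Xs_eq hW, SD.Xs_eq hW.XsOp]
  have hXXWy : Xs n (Xs n (pdy n j f)) = SD.XsOp (SD.XsOp (SD.pdv (SD.ey j) f)) := by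
    rw [hpdy, SD.Xs_eq hWy, SD.Xs_eq hWy.XsOp]
  have hXq : Xs n (fun r => (r.2.2 j : ℂ) * A2n n f r)
      = SD.XsOp (fun r => (r.2.2 j : ℂ) * SD.Gf f r) := by
    rw [hAG, SD.Xs_eq hQg]
  have hpdqG : pdq n j (A2n n f) = SD.pdv (SD.eQ j) (SD.Gf f) := by
    rw [hAG]; exact funext fun p => SD.pdq_eq hG j p
  have hXpdq : Xs n (pdq n j (A2n n f)) = SD.XsOp (SD.pdv (SD.eQ j) (SD.Gf f)) := by
    rw [hpdqG, SD.Xs_eq (hG.pdv _)]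
  have hZlow : Zlow n j f = fun p => SD.XsOp (SD.XsOp (SD.pdv (SD.ex j) f)) p
      - Complex.I * ((p.2.1 j : ℂ) * SD.Hf f p)
      - Complex.I * SD.XsOp (fun r => (r.2.2 j : ℂ) * SD.Gf f r) p := by
    funext p
    unfold Zlow
    rw [hXXW, hEN p, hXq]
    ring
  have hZhigh : Zhigh n j f = fun p => SD.XsOp (SD.XsOp (SD.pdv (SD.ey j) f)) p
      + Complex.I * ((p.1 j : ℂ) * SD.Hf f p)
      - SD.XsOp (SD.pdv (SD.eQ j) (SD.Gf f)) p := by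
    funext p
    unfold Zhigh
    rw [hXXWy, hEN p, hXpdq]
    ring
  have hSZlow : SD.S (Zlow n j f) := by
    rw [hZlow]
    exact (hW.XsOp.XsOp.sub (contDiff_const.mul (hH.ymul j))).sub
      (contDiff_const.mul hQg.XsOp)
  have hSZhigh : SD.S (Zhigh n j f) := by
    rw [hZhigh]
    exact (hWy.XsOp.XsOp.add (contDiff_const.mul (hH.xmul j))).sub (hG.pdv _).XsOp
  refine ⟨?_, ?_, ?_⟩
  · intro p
    rw [SD.Ds_eq hSZlow, hZlow]
    exact SD.ZlowOp_ker hf' hkOp j p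
  · intro p
    rw [SD.Ds_eq hSZhigh, hZhigh]
    exact SD.ZhighOp_ker hf' hkOp j p
  · intro h hEul
    have hE : SD.EulOp f = fun r => h * f r := funext fun p => by
      rw [← SD.Eul_eq hf']; exact hEul p
    constructor
    · intro p
      rw [SD.Eul_eq hSZlow, hZlow]
      exact SD.ZlowOp_eul hf' hE j p
    · intro p
      rw [SD.Eul_eq hSZhigh, hZhigh]
      exact SD.ZhighOp_eul hf' hE j p
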